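/- Let u : [0,∞) → ℝ and g, h : [0,∞) → ℂ be continuously differentiable with h compactly supported. Define W_S(t) = u(0) − (u'(log(1+t)) + u(log(1+t)))/(1+t), f(t) = g(log(1+t))·√(1+t) and h_S(t) = h(log(1+t))·√(1+t) for t ∈ [0,∞). Then ∫₀^∞ W_S(t)·(f·h_S)'(t) dt = −∫₀^∞ u(x)·g(x)·h(x) dx − ∫₀^∞ u'(x)·(g·h)'(x) dx. -/

import Mathlib

/-!
Substitute `t = eˣ - 1`, so that `dt = eˣ dx` and `(f h_S)(t) = (1 + t) φ(log (1 + t))` with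
`φ = g h`. The integrand becomes `u(0) eˣ (φ' + φ) - (u' + u)(φ' + φ) = D' - u' φ' - u φ` for
`D = (u(0) eˣ - u) φ`, and `∫₀^∞ D' = 0` because `D(0) = 0` and `D` vanishes beyond the support
of `h`.
-/

open MeasureTheory Set Filter Topology Real

section

variable {E : Type*} [NormedAddCommGroup E]

theorem HasCompactSupport.eventuallyEq_zero_atTop {f : ℝ → E} (hf : HasCompactSupport f) :
    f =ᶠ[atTop] 0 :=
  atTop_le_cocompact <|
    coclosedCompact_eq_cocompact (X := ℝ) ▸ hasCompactSupport_iff_eventuallyEq.mp hf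

theorem ContinuousOn.integrableOn_Ioi_of_eventuallyEq_zero {f : ℝ → E} {a : ℝ}
    (hc : ContinuousOn f (Ici a)) (hzero : f =ᶠ[atTop] 0) : IntegrableOn f (Ioi a) := by
  obtain ⟨M, hM⟩ := eventually_atTop.mp hzero
  refine ((hc.mono Icc_subset_Ici_self).integrableOn_Icc (b := M)).of_forall_sdiff_eq_zero
    measurableSet_Ioi fun x hx => hM x ?_
  simp only [Set.mem_sdiff, mem_Ioi, mem_Icc, not_and, not_le] at hx
  exact (hx.2 hx.1.le).le

variable [NormedSpace ℝ E]

theorem eventuallyEq_zero_atTop_of_hasDerivWithinAt {f f' : ℝ → E}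
    (hf : f =ᶠ[atTop] 0) (hderiv : ∀ x ∈ Ici (0 : ℝ), HasDerivWithinAt f (f' x) (Ici 0) x) :
    f' =ᶠ[atTop] 0 := by
  obtain ⟨M, hM⟩ := eventually_atTop.mp hf
  filter_upwards [eventually_gt_atTop M, eventually_gt_atTop 0] with x hxM hx0
  have hzero : f =ᶠ[𝓝 x] fun _ => 0 :=
    eventually_of_mem (Ioi_mem_nhds hxM) fun y hy => hM y (mem_Ioi.mp hy).le
  exact ((hderiv x hx0.le).hasDerivAt (Ici_mem_nhds hx0)).unique
    ((hasDerivAt_const x 0).congr_of_eventuallyEq hzero)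

theorem integral_Ioi_of_hasDerivWithinAt_of_eventuallyEq_zero [CompleteSpace E]
    {f f' : ℝ → E} {a : ℝ}
    (hderiv : ∀ x ∈ Ici a, HasDerivWithinAt f (f' x) (Ici a) x) (hint : IntegrableOn f' (Ioi a))
    (hf : f =ᶠ[atTop] 0) : ∫ x in Ioi a, f' x = -f a := by
  rw [integral_Ioi_of_hasDerivAt_of_tendsto (hderiv a self_mem_Ici).continuousWithinAt
    (fun x hx => (hderiv x (mem_Ioi.mp hx).le).hasDerivAt (Ici_mem_nhds hx)) hint
    (tendsto_const_nhds.congr' hf.symm)]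
  exact zero_sub _

theorem image_exp_sub_one_Ioi_zero : (fun x => exp x - 1) '' Ioi 0 = Ioi (0 : ℝ) := by
  rw [← image_image (· - 1) exp, image_exp_Ioi, exp_zero, image_sub_const_Ioi, sub_self]

theorem integral_Ioi_zero_eq_integral_exp_smul_comp_exp_sub_one (F : ℝ → E) :
    ∫ t in Ioi 0, F t = ∫ x in Ioi 0, exp x • F (exp x - 1) := by
  conv_lhs => rw [← image_exp_sub_one_Ioi_zero]
  rw [integral_image_eq_integral_abs_deriv_smul measurableSet_Ioi
    (fun x _ => ((hasDerivAt_exp x).sub_const 1).hasDerivWithinAt)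
    (fun a _ b _ hab => exp_injective (sub_left_injective hab))]
  simp_rw [abs_of_pos (exp_pos _)]

theorem HasDerivWithinAt.one_add_smul_comp_log_one_add {φ : ℝ → E} {y : E} {t : ℝ}
    (ht : 0 ≤ t) (hφ : HasDerivWithinAt φ y (Ici 0) (Real.log (1 + t))) :
    HasDerivWithinAt (fun s => (1 + s) • φ (Real.log (1 + s))) (φ (Real.log (1 + t)) + y)
      (Ici 0) t := by
  have hpos : 0 < 1 + t := by linarith
  have hlog : HasDerivWithinAt (fun s => Real.log (1 + s)) (1 + t)⁻¹ (Ici 0) t :=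
    (((hasDerivAt_id t).const_add 1).log hpos.ne').hasDerivWithinAt.congr_deriv (by simp)
  have hmaps : MapsTo (fun s => Real.log (1 + s)) (Ici 0) (Ici 0) := fun s hs =>
    log_nonneg (by linarith [mem_Ici.mp hs])
  have := (((hasDerivAt_id t).const_add 1).hasDerivWithinAt (s := Ici 0)).smul
    (hφ.scomp t hlog hmaps)
  exact this.congr_deriv (by
    rw [id, smul_smul, mul_inv_cancel₀ hpos.ne', one_smul, one_smul, add_comm]; rfl)

end

theorem exp_smul_mul_derivWithin_comp_exp_sub_one {u u' : ℝ → ℝ} {φ ψ : ℝ → ℂ} {W : ℝ → ℝ}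
    (hφ : ∀ x ∈ Ici (0 : ℝ), HasDerivWithinAt φ (ψ x) (Ici 0) x)
    (hW : ∀ t : ℝ, 0 ≤ t →
      W t = u 0 - (u' (Real.log (1 + t)) + u (Real.log (1 + t))) / (1 + t))
    {x : ℝ} (hx : 0 ≤ x) :
    exp x • ((W (exp x - 1) : ℂ) *
        derivWithin (fun s => (1 + s) • φ (Real.log (1 + s))) (Ici 0) (exp x - 1))
      = ((u 0 * exp x - (u' x + u x) : ℝ) : ℂ) * (φ x + ψ x) := by
  have ht : 0 ≤ exp x - 1 := by linarith [add_one_le_exp x]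
  have hexp : 1 + (exp x - 1) = exp x := by ring
  have hlog : Real.log (1 + (exp x - 1)) = x := by rw [hexp, log_exp]
  have hderiv := HasDerivWithinAt.one_add_smul_comp_log_one_add ht
    (by rw [hlog]; exact hφ x hx)
  rw [hW _ ht, hderiv.derivWithin (uniqueDiffOn_Ici 0 _ ht), hlog, hexp, Complex.real_smul]
  have : (exp x : ℂ) ≠ 0 := Complex.ofReal_ne_zero.mpr (exp_pos x).ne'
  push_cast
  field_simp

theorem integral_Ioi_mul_derivWithin_one_add_smul_comp_log_one_add (u u' : ℝ → ℝ)
    (φ ψ : ℝ → ℂ) (W : ℝ → ℝ)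
    (hu : ∀ x ∈ Ici (0 : ℝ), HasDerivWithinAt u (u' x) (Ici 0) x)
    (hu'c : ContinuousOn u' (Ici 0))
    (hφ : ∀ x ∈ Ici (0 : ℝ), HasDerivWithinAt φ (ψ x) (Ici 0) x)
    (hψc : ContinuousOn ψ (Ici 0)) (hφ0 : φ =ᶠ[atTop] 0) (hψ0 : ψ =ᶠ[atTop] 0)
    (hW : ∀ t : ℝ, 0 ≤ t →
      W t = u 0 - (u' (Real.log (1 + t)) + u (Real.log (1 + t))) / (1 + t)) :
    ∫ t in Ioi 0, (W t : ℂ) * derivWithin (fun s => (1 + s) • φ (Real.log (1 + s))) (Ici 0) t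
      = -(∫ x in Ioi 0, (u x : ℂ) * φ x) - ∫ x in Ioi 0, (u' x : ℂ) * ψ x := by
  have huc : ContinuousOn u (Ici 0) := fun x hx => (hu x hx).continuousWithinAt
  have hφc : ContinuousOn φ (Ici 0) := fun x hx => (hφ x hx).continuousWithinAt
  set D : ℝ → ℂ := fun x => ((u 0 * exp x - u x : ℝ) : ℂ) * φ x
  set D' : ℝ → ℂ := fun x =>
    ((u 0 * exp x - u' x : ℝ) : ℂ) * φ x + ((u 0 * exp x - u x : ℝ) : ℂ) * ψ x
  have hD : ∀ x ∈ Ici (0 : ℝ), HasDerivWithinAt D (D' x) (Ici 0) x := fun x hx =>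
    ((((hasDerivAt_exp x).const_mul (u 0)).hasDerivWithinAt.sub (hu x hx)).ofReal_comp.mul
      (hφ x hx)).congr_deriv (by simp [D'])
  have hD'int : IntegrableOn D' (Ioi 0) := by
    refine ContinuousOn.integrableOn_Ioi_of_eventuallyEq_zero (by simp only [D']; fun_prop) ?_
    filter_upwards [hφ0, hψ0] with x hφx hψx
    simp [D', hφx, hψx]
  have hD'zero : ∫ x in Ioi 0, D' x = 0 := by
    rw [integral_Ioi_of_hasDerivWithinAt_of_eventuallyEq_zero hD hD'int
      (hφ0.mono fun x hx => by simp [D, hx])]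
    simp [D]
  have hpull : ∀ x ∈ Ioi (0 : ℝ),
      exp x • ((W (exp x - 1) : ℂ) *
        derivWithin (fun s => (1 + s) • φ (Real.log (1 + s))) (Ici 0) (exp x - 1))
      = D' x - ((u x : ℂ) * φ x + (u' x : ℂ) * ψ x) := by
    intro x hx
    rw [exp_smul_mul_derivWithin_comp_exp_sub_one hφ hW (mem_Ioi.mp hx).le]
    simp only [D']
    push_cast
    ring
  have huφ : IntegrableOn (fun x => (u x : ℂ) * φ x) (Ioi 0) := by
    refine ContinuousOn.integrableOn_Ioi_of_eventuallyEq_zero (by fun_prop) ?_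
    filter_upwards [hφ0] with x hx
    simp [hx]
  have hu'ψ : IntegrableOn (fun x => (u' x : ℂ) * ψ x) (Ioi 0) := by
    refine ContinuousOn.integrableOn_Ioi_of_eventuallyEq_zero (by fun_prop) ?_
    filter_upwards [hψ0] with x hx
    simp [hx]
  rw [integral_Ioi_zero_eq_integral_exp_smul_comp_exp_sub_one,
    setIntegral_congr_fun measurableSet_Ioi hpull,
    integral_sub (g := fun x => (u x : ℂ) * φ x + (u' x : ℂ) * ψ x) hD'int (huφ.add hu'ψ),
    integral_add huφ hu'ψ, hD'zero]
  ring

/-- Substitution-and-integration-by-parts identity for the pairing of the transformed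
coefficient `W_S(t) = u(0) − (u'(log(1+t)) + u(log(1+t)))/(1+t)` with `f·h_S`, where
`f(t) = g(log(1+t))√(1+t)` and `h_S(t) = h(log(1+t))√(1+t)`:
`∫₀^∞ W_S (f h_S)' = −∫₀^∞ u g h − ∫₀^∞ u' (g h)'`. -/
theorem stmt_19 (u u' : ℝ → ℝ) (g h g' h' : ℝ → ℂ)
    (hu : ∀ x ∈ Set.Ici (0:ℝ), HasDerivWithinAt u (u' x) (Set.Ici 0) x)
    (hu'c : ContinuousOn u' (Set.Ici 0))
    (hg : ∀ x ∈ Set.Ici (0:ℝ), HasDerivWithinAt g (g' x) (Set.Ici 0) x)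
    (hg'c : ContinuousOn g' (Set.Ici 0))
    (hh : ∀ x ∈ Set.Ici (0:ℝ), HasDerivWithinAt h (h' x) (Set.Ici 0) x)
    (hh'c : ContinuousOn h' (Set.Ici 0))
    (hsupp : HasCompactSupport h)
    (WS : ℝ → ℝ) (f hS : ℝ → ℂ)
    (hWS : ∀ t : ℝ, 0 ≤ t →
      WS t = u 0 - (u' (Real.log (1 + t)) + u (Real.log (1 + t))) / (1 + t))
    (hf : ∀ t : ℝ, 0 ≤ t → f t = g (Real.log (1 + t)) * (Real.sqrt (1 + t) : ℂ))
    (hhS : ∀ t : ℝ, 0 ≤ t → hS t = h (Real.log (1 + t)) * (Real.sqrt (1 + t) : ℂ)) :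
    ∫ t in Set.Ioi (0:ℝ), (WS t : ℂ) * derivWithin (fun s => f s * hS s) (Set.Ici 0) t
      = -(∫ x in Set.Ioi (0:ℝ), (u x : ℂ) * g x * h x)
        - ∫ x in Set.Ioi (0:ℝ), (u' x : ℂ) * derivWithin (fun s => g s * h s) (Set.Ici 0) x := by
  set φ : ℝ → ℂ := fun x => g x * h x
  have hφ : ∀ x ∈ Ici (0 : ℝ), HasDerivWithinAt φ (g' x * h x + g x * h' x) (Ici 0) x :=
    fun x hx => (hg x hx).mul (hh x hx)
  have hgc : ContinuousOn g (Ici 0) := fun x hx => (hg x hx).continuousWithinAt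
  have hhc : ContinuousOn h (Ici 0) := fun x hx => (hh x hx).continuousWithinAt
  have hh0 : h =ᶠ[atTop] 0 := hsupp.eventuallyEq_zero_atTop
  have hh'0 : h' =ᶠ[atTop] 0 := eventuallyEq_zero_atTop_of_hasDerivWithinAt hh0 hh
  have hfhS : EqOn (fun s => f s * hS s) (fun s => (1 + s) • φ (Real.log (1 + s))) (Ici 0) := by
    intro s hs
    have hsqrt : (Real.sqrt (1 + s) : ℂ) * Real.sqrt (1 + s) = ((1 + s : ℝ) : ℂ) := by
      rw [← Complex.ofReal_mul, Real.mul_self_sqrt (by linarith [mem_Ici.mp hs])]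
    simp only [hf s hs, hhS s hs, Complex.real_smul, φ, ← hsqrt]
    ring
  calc _ = ∫ t in Ioi 0, (WS t : ℂ) *
          derivWithin (fun s => (1 + s) • φ (Real.log (1 + s))) (Ici 0) t :=
        setIntegral_congr_fun measurableSet_Ioi fun t ht => by
          rw [derivWithin_congr hfhS (hfhS (mem_Ioi.mp ht).le)]
    _ = -(∫ x in Ioi 0, (u x : ℂ) * φ x)
          - ∫ x in Ioi 0, (u' x : ℂ) * (g' x * h x + g x * h' x) :=
        integral_Ioi_mul_derivWithin_one_add_smul_comp_log_one_add u u' φ _ WS hu hu'c hφ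
          ((hg'c.mul hhc).add (hgc.mul hh'c))
          (hh0.mono fun x hx => by simp [φ, hx])
          (hh0.mp (hh'0.mono fun x hx' hx => by simp [hx, hx'])) hWS
    _ = _ := by
        congr 1
        · simp only [φ, mul_assoc]
        · refine setIntegral_congr_fun measurableSet_Ioi fun x hx => ?_
          have hx0 : 0 ≤ x := (mem_Ioi.mp hx).le
          rw [(hφ x hx0).derivWithin (uniqueDiffOn_Ici 0 x hx0)]
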